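/- Analyticity of the dressed eigenvalue at λ = −ħρ/2: let σ_k, D_k : ℂ → ℂ (1 ≤ k ≤ N) be functions that are continuous at λ₀ = −ħρ/2 and satisfy the crossing relations σ_{N+1−k}(−λ−ħρ) = σ_k(λ) and D_{N+1−k}(−λ−ħρ) = D_k(λ) for all λ, and let g_k be defined as: g_k(λ) = ζ_k (2λ + ħ(ρ+θ))/(2λ + ħρ) for 1 ≤ k ≤ N/2, g_k(λ) = ζ_k if N is odd and k = (N+1)/2, and g_k(λ) = ζ_k (2λ + ħ(ρ − θε))/(2λ + ħρ) for N/2 + 1 ≤ k ≤ N, where θ, ε ∈ {±1} and ζ_{N+1−k} = ε ζ_k. Then the function Λ(λ) = Σ_{k=1}^N g_k(λ) σ_k(λ) D_k(λ) has vanishing residue at λ₀, i.e. lim_{λ→λ₀} (2λ + ħρ) Λ(λ) = 0. -/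
import Mathlib


open Finset

noncomputable section

/-- The boundary functions `g_k(λ)` (indices `1 ≤ k ≤ N`). -/
def gfun (N : ℕ) (hbar ρ θ ε : ℂ) (ζ : ℕ → ℂ) (k : ℕ) (lam : ℂ) : ℂ :=
  if 2 * k ≤ N then ζ k * (2 * lam + hbar * (ρ + θ)) / (2 * lam + hbar * ρ)
  else if 2 * k = N + 1 then ζ k
  else ζ k * (2 * lam + hbar * (ρ - θ * ε)) / (2 * lam + hbar * ρ)

/-- The numerator shift constants. -/
def cfun (N : ℕ) (ρ θ ε : ℂ) (k : ℕ) : ℂ :=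
  if 2 * k ≤ N then ρ + θ else if 2 * k = N + 1 then ρ else ρ - θ * ε

lemma gfun_mul (N : ℕ) (hbar ρ θ ε : ℂ) (ζ : ℕ → ℂ) (k : ℕ) (lam : ℂ)
    (h : 2 * lam + hbar * ρ ≠ 0) :
    (2 * lam + hbar * ρ) * gfun N hbar ρ θ ε ζ k lam
      = ζ k * (2 * lam + hbar * cfun N ρ θ ε k) := by
  unfold gfun cfun
  split_ifs with h1 h2
  · field_simp
  · ring
  · field_simp

/-- the dressed eigenvalue `Λ(λ) = Σ_k g_k(λ) σ_k(λ) D_k(λ)` has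
vanishing residue at `λ₀ = −ħρ/2`: `lim_{λ→λ₀} (2λ + ħρ) Λ(λ) = 0`, provided
the `σ_k` and `D_k` are continuous at `λ₀` and satisfy the crossing relations
`σ_{k̄}(−λ−ħρ) = σ_k(λ)`, `D_{k̄}(−λ−ħρ) = D_k(λ)`. -/
theorem dressed_eigenvalue_analytic (N : ℕ) (hN : 2 ≤ N) (hbar : ℂ)
    (hhbar : hbar ≠ 0) (ρ θ ε : ℂ)
    (hθ : θ = 1 ∨ θ = -1) (hε : ε = 1 ∨ ε = -1)
    (hodd : N % 2 = 1 → ε = 1 ∧ θ = 1)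
    (ζ : ℕ → ℂ) (hζ0 : ∀ k ∈ Icc 1 N, ζ k ≠ 0)
    (hζ : ∀ k ∈ Icc 1 N, ζ (N + 1 - k) = ε * ζ k)
    (σ D : ℕ → ℂ → ℂ)
    (hσc : ∀ k ∈ Icc 1 N, ContinuousAt (σ k) (-hbar * ρ / 2))
    (hDc : ∀ k ∈ Icc 1 N, ContinuousAt (D k) (-hbar * ρ / 2))
    (hσcross : ∀ k ∈ Icc 1 N, ∀ lam : ℂ, σ (N + 1 - k) (-lam - hbar * ρ) = σ k lam)
    (hDcross : ∀ k ∈ Icc 1 N, ∀ lam : ℂ, D (N + 1 - k) (-lam - hbar * ρ) = D k lam) :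
    Filter.Tendsto
      (fun lam : ℂ => (2 * lam + hbar * ρ) *
        ∑ k ∈ Icc 1 N, gfun N hbar ρ θ ε ζ k lam * σ k lam * D k lam)
      (nhdsWithin (-hbar * ρ / 2) {(-hbar * ρ / 2)}ᶜ) (nhds 0) := by
  set lam0 : ℂ := -hbar * ρ / 2 with hlam0
  set F : ℂ → ℂ := fun lam =>
    ∑ k ∈ Icc 1 N, ζ k * (2 * lam + hbar * cfun N ρ θ ε k) * σ k lam * D k lam with hF
  have hfix : -lam0 - hbar * ρ = lam0 := by rw [hlam0]; ring
  have h2lam : 2 * lam0 = -(hbar * ρ) := by rw [hlam0]; ring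
  -- F lam0 = 0 by the involution k ↦ N+1-k
  have hF0 : F lam0 = 0 := by
    rw [hF]
    apply Finset.sum_involution (fun k _ => N + 1 - k)
    · intro k hk
      have hkm := hk
      rw [mem_Icc] at hkm
      have hσe : σ (N + 1 - k) lam0 = σ k lam0 := by
        have := hσcross k hk lam0; rwa [hfix] at this
      have hDe : D (N + 1 - k) lam0 = D k lam0 := by
        have := hDcross k hk lam0; rwa [hfix] at this
      rw [hσe, hDe, hζ k hk, h2lam]
      unfold cfun
      rcases le_or_gt (2 * k) N with h1 | h1
      · have hb1 : ¬ (2 * (N + 1 - k) ≤ N) := by omega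
        have hb2 : ¬ (2 * (N + 1 - k) = N + 1) := by omega
        simp only [if_pos h1, if_neg hb1, if_neg hb2]
        rcases hε with he | he <;> rw [he] <;> ring
      · rcases eq_or_ne (2 * k) (N + 1) with h2 | h2
        · have hb : N + 1 - k = k := by omega
          have hb1 : ¬ (2 * k ≤ N) := by omega
          rw [hb]
          simp only [if_neg hb1, if_pos h2]
          ring
        · have hb1 : ¬ (2 * k ≤ N) := by omega
          have hc1 : 2 * (N + 1 - k) ≤ N := by omega
          simp only [if_neg hb1, if_neg h2, if_pos hc1]
          ring
    · intro k hk hne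
      rw [mem_Icc] at hk
      intro heq
      -- if N+1-k = k then 2k = N+1, middle case: term is zero
      apply hne
      have h2 : 2 * k = N + 1 := by omega
      have hb1 : ¬ (2 * k ≤ N) := by omega
      rw [h2lam]
      unfold cfun
      simp only [if_neg hb1, if_pos h2]
      ring
    · intro k hk; rw [mem_Icc] at hk ⊢; omega
    · intro k hk; rw [mem_Icc] at hk; omega
  -- F is continuous at lam0
  have hFc : ContinuousAt F lam0 := by
    rw [hF]
    apply tendsto_finset_sum
    intro k hk
    exact ((continuousAt_const.mul
      ((continuousAt_const.mul continuousAt_id).add continuousAt_const)).mul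
      (hσc k hk)).mul (hDc k hk)
  have hT : Filter.Tendsto F (nhdsWithin lam0 {lam0}ᶜ) (nhds 0) := by
    rw [← hF0]
    exact hFc.continuousWithinAt
  refine hT.congr' ?_
  filter_upwards [self_mem_nhdsWithin] with lam hlam
  have hlne : lam ≠ lam0 := hlam
  have hne : 2 * lam + hbar * ρ ≠ 0 := by
    intro h0
    apply hlne
    rw [hlam0]
    linear_combination h0 / 2
  rw [hF, Finset.mul_sum]
  apply Finset.sum_congr rfl
  intro k hk
  rw [show (2 * lam + hbar * ρ) * (gfun N hbar ρ θ ε ζ k lam * σ k lam * D k lam)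
      = ((2 * lam + hbar * ρ) * gfun N hbar ρ θ ε ζ k lam) * σ k lam * D k lam from by ring,
    gfun_mul N hbar ρ θ ε ζ k lam hne]
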